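/- arXiv:1911.10718 — 5 statements merged into one kernel-verified Lean document; each statement's English description precedes it below -/
import Mathlib

section
/- Let f(y,m) = (y-1)(m^2 + m^{-2}) + y^2 - 3y + 3. Then for any (y,m) in (ℂ*)^2 with f(y,m) = 0, the assignment g1 ↦ [[m,1],[0,m^{-1}]], g2 ↦ [[m,0],[y,m^{-1}]] defines matrices A, B in SL(2,ℂ) satisfying the figure-eight knot group relation A^{-1} B A B^{-1} A = B A^{-1} B A B^{-1}. -/
/-!
The inverses of `A` and `B` are their adjugates, so both sides of the relation are explicit
matrices whose entries are Laurent polynomials in `m`. Their difference is the Riley polynomial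
`f(y, m)` times the fixed matrix `[[0, 1], [-y, 0]]`, hence vanishes exactly on the curve `f = 0`.
-/

open Matrix

theorem inv_fin_two_of_det_eq_one {R : Type*} [CommRing R] {a b c d : R}
    (h : a * d - b * c = 1) : (!![a, b; c, d])⁻¹ = !![d, -b; -c, a] := by
  rw [inv_def, adjugate_fin_two_of, det_fin_two_of, h, Ring.inverse_one, one_smul]

theorem riley_fig8_relator_sub {K : Type*} [Field K] {m : K} (y : K) (hm : m ≠ 0) :
    !![m⁻¹, -1; 0, m] * !![m, 0; y, m⁻¹] * !![m, 1; 0, m⁻¹] * !![m⁻¹, 0; -y, m] *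
        !![m, 1; 0, m⁻¹] -
      !![m, 0; y, m⁻¹] * !![m⁻¹, -1; 0, m] * !![m, 0; y, m⁻¹] * !![m, 1; 0, m⁻¹] *
        !![m⁻¹, 0; -y, m] =
      ((y - 1) * (m ^ 2 + m⁻¹ ^ 2) + y ^ 2 - 3 * y + 3) • !![0, 1; -y, 0] := by
  simp only [mul_fin_two]
  ext i j
  fin_cases i <;> fin_cases j <;>
    simp only [Matrix.sub_apply, Matrix.smul_apply, of_apply, cons_val', cons_val_zero,
      cons_val_one, cons_val_fin_one, smul_eq_mul, Fin.zero_eta, Fin.mk_one] <;>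
    field_simp <;> ring

theorem riley_rep_satisfies_fig8_relation_general
    (y m : ℂ) (hm : m ≠ 0)
    (hf : (y - 1) * (m ^ 2 + m⁻¹ ^ 2) + y ^ 2 - 3 * y + 3 = 0) :
    let A : Matrix (Fin 2) (Fin 2) ℂ := !![m, 1; 0, m⁻¹]
    let B : Matrix (Fin 2) (Fin 2) ℂ := !![m, 0; y, m⁻¹]
    A.det = 1 ∧ B.det = 1 ∧
      A⁻¹ * B * A * B⁻¹ * A = B * A⁻¹ * B * A * B⁻¹ := by
  intro A B
  have hdA : m * m⁻¹ - 1 * 0 = 1 := by simp [hm]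
  have hdB : m * m⁻¹ - 0 * y = 1 := by simp [hm]
  refine ⟨det_fin_two_of m 1 0 m⁻¹ ▸ hdA, det_fin_two_of m 0 y m⁻¹ ▸ hdB, ?_⟩
  rw [← sub_eq_zero, inv_fin_two_of_det_eq_one hdA, inv_fin_two_of_det_eq_one hdB, neg_zero]
  exact (riley_fig8_relator_sub y hm).trans (by rw [hf, zero_smul])

theorem riley_rep_satisfies_fig8_relation
    (y m : ℂ) (hy : y ≠ 0) (hm : m ≠ 0)
    (hf : (y - 1) * (m ^ 2 + m⁻¹ ^ 2) + y ^ 2 - 3 * y + 3 = 0) :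
    let A : Matrix (Fin 2) (Fin 2) ℂ := !![m, 1; 0, m⁻¹]
    let B : Matrix (Fin 2) (Fin 2) ℂ := !![m, 0; y, m⁻¹]
    A.det = 1 ∧ B.det = 1 ∧
      A⁻¹ * B * A * B⁻¹ * A = B * A⁻¹ * B * A * B⁻¹ :=
  riley_rep_satisfies_fig8_relation_general y m hm hf
end

section
/- Conversely, if A = [[m,1],[0,m^{-1}]] and B = [[m,0],[y,m^{-1}]] in SL(2,ℂ) with m, y ∈ ℂ* satisfy A^{-1} B A B^{-1} A = B A^{-1} B A B^{-1}, then (y-1)(m^2 + m^{-2}) + y^2 - 3y + 3 = 0. -/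
open Matrix

theorem fig8_relation_implies_riley_equation
    (y m : ℂ) (hy : y ≠ 0) (hm : m ≠ 0)
    (A B : Matrix (Fin 2) (Fin 2) ℂ)
    (hA : A = !![m, 1; 0, m⁻¹]) (hB : B = !![m, 0; y, m⁻¹])
    (hrel : A⁻¹ * B * A * B⁻¹ * A = B * A⁻¹ * B * A * B⁻¹) :
    (y - 1) * (m ^ 2 + m⁻¹ ^ 2) + y ^ 2 - 3 * y + 3 = 0 := by
  have hAinv : A⁻¹ = !![m⁻¹, -1; 0, m] := by
    apply Matrix.inv_eq_right_inv
    rw [hA]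
    ext i j
    fin_cases i <;> fin_cases j <;>
      simp [Matrix.mul_apply, Fin.sum_univ_two] <;> field_simp
  have hBinv : B⁻¹ = !![m⁻¹, 0; -y, m] := by
    apply Matrix.inv_eq_right_inv
    rw [hB]
    ext i j
    fin_cases i <;> fin_cases j <;>
      simp [Matrix.mul_apply, Fin.sum_univ_two] <;> field_simp <;> ring
  rw [hAinv, hBinv, hA, hB] at hrel
  have h := congrFun (congrFun hrel 0) 1
  simp [Matrix.mul_apply, Fin.sum_univ_two] at h
  field_simp at h ⊢
  have h3 : m ^ 3 ≠ 0 := pow_ne_zero _ hm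
  have hmul : m ^ 3 * ((y - 1) * (m ^ 4 + 1) + (y ^ 2 - 3 * y + 3) * m ^ 2) = m ^ 3 * 0 := by
    rw [mul_zero]; linear_combination m ^ 3 * h
  have key := mul_left_cancel₀ h3 hmul
  linear_combination key
end

section
/- Let A(m,l) = l + l^{-1} + (-m^{-4} + m^{-2} + 2 + m^2 - m^4), viewed as a Laurent polynomial on (ℂ*)^2. Then A(m,l) = 0 holds whenever l = -m^{-2}(y-3)(y-1)^2 - m^{-4}(y^2 - 3y + 1) and (y-1)(m^2 + m^{-2}) + y^2 - 3y + 3 = 0 for some y ∈ ℂ. -/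
/-!
Writing `l = f(m⁻²)` for the polynomial `f(a) = -a (y-3)(y-1)² - a² (y²-3y+1)`, the Riley
relation, which is symmetric in `m²` and `m⁻²`, forces `f(m⁻²) f(m²) = 1`. Hence `l⁻¹ = f(m²)`,
and `l + l⁻¹` together with the remaining terms of `A` vanishes modulo the Riley relation.
-/

namespace Fig8

variable {R : Type*} [CommRing R]

/-- The longitude eigenvalue on the Riley curve as a polynomial in `a = m⁻²`. -/
def longitude (y a : R) : R :=
  -a * (y - 3) * (y - 1) ^ 2 - a ^ 2 * (y ^ 2 - 3 * y + 1)

/-- The Riley polynomial of the figure-eight knot with `m² + m⁻²` written as `a + b`, `a b = 1`. -/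
def rileyPoly (y a b : R) : R :=
  (y - 1) * (a + b) + y ^ 2 - 3 * y + 3

variable {y a b : R}

theorem longitude_mul_longitude (hab : a * b = 1) (hriley : rileyPoly y a b = 0) :
    longitude y a * longitude y b = 1 := by
  unfold longitude rileyPoly at *
  linear_combination (a * b * (y - 3) * (y - 1) * (y ^ 2 - 3 * y + 1)) * hriley +
    ((y - 3) ^ 2 * (y - 1) ^ 4 - (y - 3) * (y - 1) * (y ^ 2 - 3 * y + 1) * (y ^ 2 - 3 * y + 3) +
      (1 + a * b) * (y ^ 2 - 3 * y + 1) ^ 2) * hab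

theorem longitude_add_longitude (hab : a * b = 1) (hriley : rileyPoly y a b = 0) :
    longitude y a + longitude y b + (-a ^ 2 + a + 2 + b - b ^ 2) = 0 := by
  unfold longitude rileyPoly at *
  linear_combination (2 - (a + b) * (y - 2)) * hriley + 2 * (y - 1) * (y - 2) * hab

end Fig8

open Fig8 in
theorem fig8_longitude_satisfies_A_polynomial
    (y m : ℂ) (hm : m ≠ 0)
    (hf : (y - 1) * (m ^ 2 + m⁻¹ ^ 2) + y ^ 2 - 3 * y + 3 = 0)
    (l : ℂ)
    (hl : l = -m⁻¹ ^ 2 * (y - 3) * (y - 1) ^ 2 - m⁻¹ ^ 4 * (y ^ 2 - 3 * y + 1)) :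
    l + l⁻¹ + (-m⁻¹ ^ 4 + m⁻¹ ^ 2 + 2 + m ^ 2 - m ^ 4) = 0 := by
  have hab : m⁻¹ ^ 2 * m ^ 2 = 1 := by rw [← mul_pow, inv_mul_cancel₀ hm, one_pow]
  have hriley : rileyPoly y (m⁻¹ ^ 2) (m ^ 2) = 0 := by
    rw [rileyPoly]
    linear_combination hf
  have hl' : l = longitude y (m⁻¹ ^ 2) := by
    rw [hl, longitude]
    ring
  have hl_inv : l⁻¹ = longitude y (m ^ 2) :=
    inv_eq_of_mul_eq_one_right (hl' ▸ longitude_mul_longitude hab hriley)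
  rw [hl_inv, hl']
  linear_combination longitude_add_longitude hab hriley
end

section
/- Let A(m,l) = l + l^{-1} - m^{-4} + m^{-2} + 2 + m^2 - m^4 and B(m,l) = m l - x with x ∈ ℂ*. For all but finitely many x ∈ ℂ*, every common zero (m,l) ∈ (ℂ*)^2 of A and B is simple, i.e., the Jacobian det(∂(A,B)/∂(m,l)) is nonzero there. -/
noncomputable def fig8A (m l : ℂ) : ℂ :=
  l + l⁻¹ + (-m⁻¹ ^ 4 + m⁻¹ ^ 2 + 2 + m ^ 2 - m ^ 4)

noncomputable def slopeB (x m l : ℂ) : ℂ := m * l - x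

/-- Jacobian determinant of the system (A, B) at (m, l). -/
noncomputable def jacAB (x m l : ℂ) : ℂ :=
  deriv (fun m' => fig8A m' l) m * deriv (fun l' => slopeB x m l') l -
    deriv (fun l' => fig8A m l') l * deriv (fun m' => slopeB x m' l) m

lemma derivA_m (l : ℂ) {m : ℂ} (hm : m ≠ 0) :
    deriv (fun m' => fig8A m' l) m = 4 * m⁻¹ ^ 5 - 2 * m⁻¹ ^ 3 + 2 * m - 4 * m ^ 3 := by
  have hinv : HasDerivAt (fun m' : ℂ => m'⁻¹) (-(m ^ 2)⁻¹) m := hasDerivAt_inv hm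
  have hp2 := hasDerivAt_pow 2 m
  have hp4 := hasDerivAt_pow 4 m
  have H : HasDerivAt (fun m' => fig8A m' l)
      (-((4:ℕ) * m⁻¹ ^ (4-1) * (-(m ^ 2)⁻¹)) + (2:ℕ) * m⁻¹ ^ (2-1) * (-(m ^ 2)⁻¹)
        + (2:ℕ) * m ^ (2-1) - (4:ℕ) * m ^ (4-1)) m := by
    have := ((((((hinv.pow 4).neg.add (hinv.pow 2)).add_const 2).add hp2).sub hp4).const_add
      (l + l⁻¹))
    unfold fig8A
    exact this
  rw [H.deriv, ← inv_pow]
  simp only [Nat.cast_ofNat, show (4:ℕ) - 1 = 3 from rfl, show (2:ℕ) - 1 = 1 from rfl]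
  ring

lemma derivA_l (m : ℂ) {l : ℂ} (hl : l ≠ 0) :
    deriv (fun l' => fig8A m l') l = 1 - (l ^ 2)⁻¹ := by
  have hinv : HasDerivAt (fun l' : ℂ => l'⁻¹) (-(l ^ 2)⁻¹) l := hasDerivAt_inv hl
  have H : HasDerivAt (fun l' => fig8A m l') (1 + -(l ^ 2)⁻¹) l := by
    have := ((hasDerivAt_id l).add hinv).add_const (-m⁻¹ ^ 4 + m⁻¹ ^ 2 + 2 + m ^ 2 - m ^ 4)
    simpa [fig8A] using this
  rw [H.deriv]; ring

lemma derivB_l (x m l : ℂ) : deriv (fun l' => slopeB x m l') l = m := by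
  have H : HasDerivAt (fun l' => slopeB x m l') (m * 1) l :=
    ((hasDerivAt_id l).const_mul m).sub_const x
  rw [H.deriv]; ring

lemma derivB_m (x m l : ℂ) : deriv (fun m' => slopeB x m' l) m = l := by
  have H : HasDerivAt (fun m' => slopeB x m' l) (1 * l) m := by
    have := ((hasDerivAt_id m).mul_const l).sub_const x
    simpa [slopeB] using this
  rw [H.deriv]; ring

theorem fig8_slope_one_one_generically_simple :
    {x : ℂ | x ≠ 0 ∧ ∃ m l : ℂ, m ≠ 0 ∧ l ≠ 0 ∧
      fig8A m l = 0 ∧ slopeB x m l = 0 ∧ jacAB x m l = 0}.Finite := by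
  set R : Polynomial ℂ :=
    (Polynomial.C (-1) + Polynomial.X ^ 2 + 2 * Polynomial.X ^ 4 + Polynomial.X ^ 6
        - Polynomial.X ^ 8) ^ 2
      - (Polynomial.C 4 - 2 * Polynomial.X ^ 2 + 2 * Polynomial.X ^ 6
        - 4 * Polynomial.X ^ 8) ^ 2
      - 4 * Polynomial.X ^ 8 with hR
  have hR0 : R ≠ 0 := by
    intro h
    have := congrArg (Polynomial.eval (2 : ℂ)) h
    simp [hR] at this
    norm_num at this
  have hfin : {m : ℂ | Polynomial.IsRoot R m}.Finite := Polynomial.finite_setOf_isRoot hR0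
  have himg := hfin.image (fun m : ℂ =>
    ((4 - 2*m^2 + 2*m^6 - 4*m^8) - (-1 + m^2 + 2*m^4 + m^6 - m^8)) * m⁻¹ ^ 3 / 2)
  refine himg.subset ?_
  rintro x ⟨hx, m, l, hm, hl, hA, hB, hJ⟩
  have hJ' : (4 * m⁻¹ ^ 5 - 2 * m⁻¹ ^ 3 + 2 * m - 4 * m ^ 3) * m - (1 - (l ^ 2)⁻¹) * l = 0 := by
    rw [jacAB, derivA_m l hm, derivA_l m hl, derivB_l, derivB_m] at hJ
    linear_combination hJ
  have hA' : fig8A m l = 0 := hA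
  rw [fig8A] at hA'
  have E1 : l^2 * m^4 + m^4 + l * (-1 + m^2 + 2*m^4 + m^6 - m^8) = 0 := by
    have h : m^2 * (l^2 * m^4 + m^4 + l * (-1 + m^2 + 2*m^4 + m^6 - m^8)) = 0 := by
      field_simp at hA'
      linear_combination m^2 * hA'
    exact (mul_eq_zero.mp h).resolve_left (pow_ne_zero 2 hm)
  have E2 : l * (4 - 2*m^2 + 2*m^6 - 4*m^8) - (l^2 - 1) * m^4 = 0 := by
    have h : (m^4 * l) * (l * (4 - 2*m^2 + 2*m^6 - 4*m^8) - (l^2 - 1) * m^4) = 0 := by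
      field_simp at hJ'
      linear_combination (m^4 * l) * hJ'
    exact (mul_eq_zero.mp h).resolve_left (mul_ne_zero (pow_ne_zero 4 hm) hl)
  have hl2 : 2 * l * m^4 + (-1 + m^2 + 2*m^4 + m^6 - m^8) - (4 - 2*m^2 + 2*m^6 - 4*m^8) = 0 := by
    have h : l * (2 * l * m^4 + (-1 + m^2 + 2*m^4 + m^6 - m^8) - (4 - 2*m^2 + 2*m^6 - 4*m^8)) = 0 := by
      linear_combination E1 - E2
    exact (mul_eq_zero.mp h).resolve_left hl
  have hF1 : l * ((-1 + m^2 + 2*m^4 + m^6 - m^8) + (4 - 2*m^2 + 2*m^6 - 4*m^8)) + 2 * m^4 = 0 := by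
    linear_combination E1 + E2
  have hB' : m * l = x := by rw [slopeB] at hB; linear_combination hB
  refine ⟨m, ?_, ?_⟩
  · show Polynomial.IsRoot R m
    simp only [hR, Polynomial.IsRoot, Polynomial.eval_sub, Polynomial.eval_add,
      Polynomial.eval_mul, Polynomial.eval_pow, Polynomial.eval_ofNat, Polynomial.eval_C,
      Polynomial.eval_X]
    linear_combination ((-1 + m^2 + 2*m^4 + m^6 - m^8) + (4 - 2*m^2 + 2*m^6 - 4*m^8)) * hl2
      - 2 * m^4 * hF1
  · show ((4 - 2*m^2 + 2*m^6 - 4*m^8) - (-1 + m^2 + 2*m^4 + m^6 - m^8)) * m⁻¹ ^ 3 / 2 = x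
    field_simp
    linear_combination 2 * m^3 * hB' - hl2
end

section
/- Let f, g, h be smooth functions of (y,m,l) with h(y,m,l) = m^p l^q − x depending only on (m,l), and suppose at a point f = g = 0 with det(∂(f,g)/∂(y,m)) ≠ 0, so that (y,m) are locally functions of l along {f = g = 0}. Then det(∂(f,g,h)/∂(y,m,l)) = det(∂(f,g)/∂(y,m)) · (x/l) · (q + (l/m)(∂m/∂l) p), where ∂m/∂l is the derivative along the curve {f = g = 0} and x = m^p l^q at the point. -/
open Matrix

lemma curve_rel (F : ℂ → ℂ → ℂ → ℂ)
    (hF : Differentiable ℂ (fun v : ℂ × ℂ × ℂ => F v.1 v.2.1 v.2.2))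
    (y₀ m₀ l₀ : ℂ) (Y M : ℂ → ℂ) (Y' M' : ℂ)
    (hY : HasDerivAt Y Y' l₀) (hM : HasDerivAt M M' l₀)
    (hY₀ : Y l₀ = y₀) (hM₀ : M l₀ = m₀)
    (hcurve : ∀ᶠ l in nhds l₀, F (Y l) (M l) l = 0) :
    Y' * deriv (fun y => F y m₀ l₀) y₀ + M' * deriv (fun m => F y₀ m l₀) m₀
      + deriv (fun l => F y₀ m₀ l) l₀ = 0 := by
  set Φ : ℂ × ℂ × ℂ → ℂ := fun v => F v.1 v.2.1 v.2.2 with hΦdef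
  set D := fderiv ℂ Φ (y₀, m₀, l₀) with hD
  have hΦ : HasFDerivAt Φ D (y₀, m₀, l₀) := (hF (y₀, m₀, l₀)).hasFDerivAt
  have ha : HasDerivAt (fun y => F y m₀ l₀) (D (1, 0, 0)) y₀ := by
    have h1 : HasDerivAt (fun y => ((y, m₀, l₀) : ℂ × ℂ × ℂ)) (1, 0, 0) y₀ :=
      (hasDerivAt_id y₀).prodMk ((hasDerivAt_const _ _).prodMk (hasDerivAt_const _ _))
    exact hΦ.comp_hasDerivAt y₀ h1
  have hb : HasDerivAt (fun m => F y₀ m l₀) (D (0, 1, 0)) m₀ := by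
    have h1 : HasDerivAt (fun m => ((y₀, m, l₀) : ℂ × ℂ × ℂ)) (0, 1, 0) m₀ :=
      (hasDerivAt_const _ _).prodMk ((hasDerivAt_id m₀).prodMk (hasDerivAt_const _ _))
    exact hΦ.comp_hasDerivAt m₀ h1
  have hc : HasDerivAt (fun l => F y₀ m₀ l) (D (0, 0, 1)) l₀ := by
    have h1 : HasDerivAt (fun l => ((y₀, m₀, l) : ℂ × ℂ × ℂ)) (0, 0, 1) l₀ :=
      (hasDerivAt_const _ _).prodMk ((hasDerivAt_const _ _).prodMk (hasDerivAt_id l₀))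
    exact hΦ.comp_hasDerivAt l₀ h1
  have hγ : HasDerivAt (fun l => ((Y l, M l, l) : ℂ × ℂ × ℂ)) (Y', M', 1) l₀ :=
    hY.prodMk (hM.prodMk (hasDerivAt_id l₀))
  have hΦ' : HasFDerivAt Φ D (Y l₀, M l₀, l₀) := by rw [hY₀, hM₀]; exact hΦ
  have hF0 : HasDerivAt (fun l => F (Y l) (M l) l) (D (Y', M', 1)) l₀ :=
    by have := hΦ'.comp_hasDerivAt l₀ hγ; exact this
  have hzero : D (Y', M', 1) = 0 := by
    rw [← hF0.deriv]
    have heq : (fun l => F (Y l) (M l) l) =ᶠ[nhds l₀] (fun _ => (0 : ℂ)) := hcurve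
    rw [heq.deriv_eq, deriv_const]
  have hsum : ((Y', M', 1) : ℂ × ℂ × ℂ)
      = Y' • (1, 0, 0) + M' • (0, 1, 0) + (0, 0, 1) := by
    simp [Prod.ext_iff]
  rw [ha.deriv, hb.deriv, hc.deriv]
  have hlin : D (Y', M', 1) = Y' * D (1,0,0) + M' * D (0,1,0) + D (0,0,1) := by
    rw [hsum, map_add, map_add, D.map_smul, D.map_smul, smul_eq_mul, smul_eq_mul]
  rw [← hlin]; exact hzero

/-- Lemma 5.4 (5₂ knot): chain-rule identity relating the 3×3 Jacobian of
(f, g, h) with h(y,m,l) = m^p l^q - x to the 2×2 Jacobian of (f, g) in (y,m)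
and the logarithmic derivative q + p (l/m) dm/dl along the curve {f = g = 0}. -/
theorem jacobian_chain_rule_identity
    (p q : ℤ) (x : ℂ)
    (f g : ℂ → ℂ → ℂ → ℂ)
    (hf : Differentiable ℂ (fun v : ℂ × ℂ × ℂ => f v.1 v.2.1 v.2.2))
    (hg : Differentiable ℂ (fun v : ℂ × ℂ × ℂ => g v.1 v.2.1 v.2.2))
    (y₀ m₀ l₀ : ℂ) (hm₀ : m₀ ≠ 0) (hl₀ : l₀ ≠ 0)
    (hx : x = m₀ ^ p * l₀ ^ q)
    -- local parametrization (Y l, M l) of the curve {f = g = 0} near l₀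
    (Y M : ℂ → ℂ) (Y' M' : ℂ)
    (hY : HasDerivAt Y Y' l₀) (hM : HasDerivAt M M' l₀)
    (hY₀ : Y l₀ = y₀) (hM₀ : M l₀ = m₀)
    (hcurve : ∀ᶠ l in nhds l₀, f (Y l) (M l) l = 0 ∧ g (Y l) (M l) l = 0)
    -- 2×2 Jacobian of (f,g) in (y,m) is nonzero at the point
    (hjac2 :
      det !![deriv (fun y => f y m₀ l₀) y₀, deriv (fun m => f y₀ m l₀) m₀;
             deriv (fun y => g y m₀ l₀) y₀, deriv (fun m => g y₀ m l₀) m₀] ≠ 0) :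
    det !![deriv (fun y => f y m₀ l₀) y₀, deriv (fun m => f y₀ m l₀) m₀,
             deriv (fun l => f y₀ m₀ l) l₀;
           deriv (fun y => g y m₀ l₀) y₀, deriv (fun m => g y₀ m l₀) m₀,
             deriv (fun l => g y₀ m₀ l) l₀;
           0, deriv (fun m => m ^ p * l₀ ^ q - x) m₀,
             deriv (fun l => m₀ ^ p * l ^ q - x) l₀] =
      det !![deriv (fun y => f y m₀ l₀) y₀, deriv (fun m => f y₀ m l₀) m₀;
             deriv (fun y => g y m₀ l₀) y₀, deriv (fun m => g y₀ m l₀) m₀] *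
        (x / l₀) * ((q : ℂ) + (l₀ / m₀) * M' * (p : ℂ)) := by
  have hrf := curve_rel f hf y₀ m₀ l₀ Y M Y' M' hY hM hY₀ hM₀
    (hcurve.mono fun l h => h.1)
  have hrg := curve_rel g hg y₀ m₀ l₀ Y M Y' M' hY hM hY₀ hM₀
    (hcurve.mono fun l h => h.2)
  have hB : deriv (fun m => m ^ p * l₀ ^ q - x) m₀ = (p : ℂ) * m₀ ^ (p - 1) * l₀ ^ q :=
    (((hasDerivAt_zpow p m₀ (Or.inl hm₀)).mul_const (l₀ ^ q)).sub_const x).deriv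
  have hC : deriv (fun l => m₀ ^ p * l ^ q - x) l₀ = m₀ ^ p * ((q : ℂ) * l₀ ^ (q - 1)) :=
    (((hasDerivAt_zpow q l₀ (Or.inl hl₀)).const_mul (m₀ ^ p)).sub_const x).deriv
  have hcf : deriv (fun l => f y₀ m₀ l) l₀ =
      -(Y' * deriv (fun y => f y m₀ l₀) y₀ + M' * deriv (fun m => f y₀ m l₀) m₀) := by
    linear_combination hrf
  have hcg : deriv (fun l => g y₀ m₀ l) l₀ =
      -(Y' * deriv (fun y => g y m₀ l₀) y₀ + M' * deriv (fun m => g y₀ m l₀) m₀) := by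
    linear_combination hrg
  rw [hB, hC, hcf, hcg, hx, Matrix.det_fin_three, Matrix.det_fin_two,
    zpow_sub_one₀ hm₀, zpow_sub_one₀ hl₀]
  simp only [Matrix.of_apply, Matrix.cons_val', Matrix.cons_val_zero, Matrix.cons_val_one,
    Matrix.cons_val_two, Matrix.head_cons, Matrix.tail_cons, Matrix.empty_val',
    Matrix.cons_val_fin_one, Matrix.head_fin_const]
  field_simp
  ring
end
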